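/- Let X be a Banach space, 1 ≤ p ≤ ∞ with conjugate p', and 0 < q < p'. Let ρ = (ρ_j)_{j≥1} satisfy ρ_min := inf_j ρ_j > 1 and (ρ_j^{-1})_{j≥1} ∈ ℓ_q(ℕ). Set θ := 1 − q/p', κ_j := ρ_j^θ, q_θ := q/θ. Let (t_ν)_{ν∈F} ⊂ X with ‖(ρ^ν‖t_ν‖_X)_ν‖_{ℓ_p(F)} < ∞ and u(y) = Σ_ν t_ν y^ν absolutely convergent for all y ∈ Y. Then M₁ := Σ_ν κ^ν ‖t_ν‖_X < ∞ and for every integer m ≥ 0 there is a set Λ ⊆ F with #Λ = m+1 such that P(y) := Σ_{ν∈Λ} t_ν y^ν satisfies sup_{y∈Y} ‖u(y) − P(y)‖_X ≤ C(κ, q_θ) · M₁ · ‖(κ_j^{-1})_{j≥1}‖_{ℓ_{q_θ}(ℕ)} · (m+1)^{−r}, where r := −1 + 1/p + 1/q, C(κ,q_θ) := β^{1/q_θ} exp((β/q_θ)‖(κ_j^{-1})‖_{ℓ_{q_θ}}^{q_θ}) and β := −ln(1 − κ_min^{−q_θ})κ_min^{q_θ} with κ_min := ρ_min^θ. -/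

import Mathlib

open scoped BigOperators ENNReal

noncomputable section

/-- The set `F` of finitely supported multi-indices. -/
abbrev MIdx : Type := ℕ →₀ ℕ

/-- `ρ^ν := ∏_j ρ_j^{ν_j}` for a finitely supported multi-index `ν`. -/
def mpow (ρ : ℕ → ℝ) (ν : MIdx) : ℝ := ν.prod fun j k => ρ j ^ k

/-- The `ℓ_p(F)` norm (`p ∈ [1,∞]`, valued in `ℝ≥0∞`) of a family of nonnegative reals. -/
def lpF (p : ℝ≥0∞) (a : MIdx → ℝ) : ℝ≥0∞ :=
  if p = ∞ then ⨆ ν, ENNReal.ofReal (a ν)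
  else (∑' ν, ENNReal.ofReal (a ν) ^ p.toReal) ^ (1 / p.toReal)

/-!
Put `x_j := κ_j^{-q_θ} = ρ_j^{-q}`, so that `0 ≤ x_j ≤ c := κ_min^{-q_θ} < 1`, and `S := Σ_j x_j`.
Concavity of `log` gives `(1 - x)⁻¹ ≤ exp (β x)` on `[0, c]`, hence
`Σ_ν x^ν ≤ ∏_j (1 - x_j)⁻¹ ≤ exp (β S)`.

Writing `κ^ν = ρ^ν (ρ^{θ-1})^ν`, the second factor lies in `ℓ_{p'}` because
`(ρ^{θ-1})^{p' ν} = x^ν`, so Hölder's inequality gives `M₁ < ∞`.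

Let `Λ` consist of `m + 1` indices with the largest values of `x^ν`. For `ν ∉ Λ`, the set
`Λ ∪ {ν}` without `0` has at least `m + 1` elements, each of weight at least `x^ν`, so
`(m + 1) x^ν ≤ Σ_ν x^ν - 1 ≤ e^{βS} - 1 ≤ β S e^{βS}`. As `κ^{-ν} = (x^ν)^{1/q_θ}` and `1/q_θ = r`,
this bounds `κ^{-ν}` by `C S^{1/q_θ} (m + 1)^{-r}` off `Λ`, and the error is at most
`Σ_{ν ∉ Λ} ‖t_ν‖ ≤ sup_{ν ∉ Λ} κ^{-ν} · M₁`.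
-/

open Finset Real

lemma mpow_eq_prod_of_support_subset {x : ℕ → ℝ} {ν : MIdx} {s : Finset ℕ} (h : ν.support ⊆ s) :
    mpow x ν = ∏ j ∈ s, x j ^ ν j :=
  Finsupp.prod_of_support_subset ν h _ fun j _ => pow_zero (x j)

lemma mpow_nonneg {x : ℕ → ℝ} (hx : ∀ j, 0 ≤ x j) (ν : MIdx) : 0 ≤ mpow x ν :=
  prod_nonneg fun j _ => pow_nonneg (hx j) _

lemma mpow_pos {x : ℕ → ℝ} (hx : ∀ j, 0 < x j) (ν : MIdx) : 0 < mpow x ν :=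
  prod_pos fun j _ => pow_pos (hx j) _

@[simp]
lemma mpow_zero (x : ℕ → ℝ) : mpow x 0 = 1 := by
  simp [mpow]

lemma mpow_mul (x z : ℕ → ℝ) (ν : MIdx) :
    mpow (fun j => x j * z j) ν = mpow x ν * mpow z ν := by
  simp only [mpow, Finsupp.prod, mul_pow, prod_mul_distrib]

lemma mpow_inv (x : ℕ → ℝ) (ν : MIdx) : mpow (fun j => (x j)⁻¹) ν = (mpow x ν)⁻¹ := by
  simp only [mpow, Finsupp.prod, inv_pow, prod_inv_distrib]

lemma mpow_rpow {x : ℕ → ℝ} (hx : ∀ j, 0 ≤ x j) (s : ℝ) (ν : MIdx) :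
    mpow x ν ^ s = mpow (fun j => x j ^ s) ν := by
  rw [mpow, Finsupp.prod, ← Real.finsetProd_rpow _ _ fun j _ => pow_nonneg (hx j) _]
  exact prod_congr rfl fun j _ => (Real.rpow_pow_comm (hx j) s (ν j)).symm

lemma abs_mpow_le_one {y : ℕ → ℝ} (hy : ∀ j, |y j| ≤ 1) (ν : MIdx) : |mpow y ν| ≤ 1 := by
  rw [mpow, Finsupp.prod, abs_prod]
  exact prod_le_one (fun j _ => abs_nonneg _) fun j _ => by
    rw [abs_pow]; exact pow_le_one₀ (abs_nonneg _) (hy j)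

lemma sum_finsupp_mpow (x : ℕ → ℝ) (s : Finset ℕ) (t : ℕ → Finset ℕ) :
    ∑ ν ∈ s.finsupp t, mpow x ν = ∏ j ∈ s, ∑ k ∈ t j, x j ^ k := by
  rw [prod_sum, Finset.finsupp, sum_map]
  refine sum_congr (by congr!) fun f _ => ?_
  rw [Function.Embedding.coeFn_mk,
    mpow_eq_prod_of_support_subset (Finsupp.support_indicator_subset s f), ← prod_attach]
  exact prod_congr rfl fun j _ => by rw [Finsupp.indicator_of_mem]

lemma exists_subset_finsupp_range (A : Finset MIdx) :
    ∃ N K : ℕ, A ⊆ (range N).finsupp fun _ => range K := by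
  obtain ⟨N, hN⟩ := exists_nat_subset_range (A.sup Finsupp.support)
  refine ⟨N, A.sup Finsupp.degree + 1, fun ν hν => Finset.mem_finsupp_iff.2 ⟨?_, ?_⟩⟩
  · exact (le_sup (f := Finsupp.support) hν).trans hN
  · intro j _
    exact mem_range.2 (Nat.lt_succ_of_le ((Finsupp.le_degree j ν).trans (le_sup hν)))

lemma Real.inv_one_sub_le_exp_mul {c x : ℝ} (hc0 : 0 < c) (hc1 : c < 1) (hx0 : 0 ≤ x)
    (hxc : x ≤ c) :
    (1 - x)⁻¹ ≤ exp (-log (1 - c) / c * x) := by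
  have hlog := strictConcaveOn_log_Ioi.concaveOn.2 (Set.mem_Ioi.2 (sub_pos.2 hc1))
    (Set.mem_Ioi.2 one_pos) (div_nonneg hx0 hc0.le) (sub_nonneg.2 ((div_le_one hc0).2 hxc))
    (add_sub_cancel _ _)
  have hconv : x / c * (1 - c) + (1 - x / c) * 1 = 1 - x := by field_simp; ring
  simp only [smul_eq_mul, log_one, mul_zero, add_zero, hconv] at hlog
  calc (1 - x)⁻¹ = exp (-log (1 - x)) := by rw [exp_neg, exp_log (by linarith)]
    _ ≤ exp (-log (1 - c) / c * x) := by
        rw [exp_le_exp, show -log (1 - c) / c * x = -(x / c * log (1 - c)) by ring]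
        linarith

lemma Real.exp_sub_one_le_mul_exp (u : ℝ) : exp u - 1 ≤ u * exp u := by
  nlinarith [add_one_le_exp (-u), exp_pos u, exp_neg u, mul_inv_cancel₀ (exp_pos u).ne']

lemma Real.iInf_le_of_ne_zero {ι : Type*} {f : ι → ℝ} (h : ⨅ i, f i ≠ 0) (i : ι) :
    ⨅ i, f i ≤ f i :=
  ciInf_le (not_not.1 fun hb => h (Real.iInf_of_not_bddBelow hb)) i

section MpowSum

variable {x : ℕ → ℝ} {β : ℝ} (hx0 : ∀ j, 0 ≤ x j) (hx1 : ∀ j, x j < 1) (hβ : 0 ≤ β)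
  (hxβ : ∀ j, (1 - x j)⁻¹ ≤ exp (β * x j)) (hx : Summable x)
include hx0 hx1 hβ hxβ hx

lemma sum_mpow_le_exp (A : Finset MIdx) : ∑ ν ∈ A, mpow x ν ≤ exp (β * ∑' j, x j) := by
  obtain ⟨N, K, hA⟩ := exists_subset_finsupp_range A
  have hgeom : ∀ j, ∑ k ∈ range K, x j ^ k ≤ (1 - x j)⁻¹ := fun j =>
    (summable_geometric_of_lt_one (hx0 j) (hx1 j)).sum_le_tsum _ (fun k _ => pow_nonneg (hx0 j) k)
      |>.trans_eq (tsum_geometric_of_lt_one (hx0 j) (hx1 j))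
  calc ∑ ν ∈ A, mpow x ν ≤ ∑ ν ∈ (range N).finsupp fun _ => range K, mpow x ν :=
        sum_le_sum_of_subset_of_nonneg hA fun ν _ _ => mpow_nonneg hx0 ν
    _ = ∏ j ∈ range N, ∑ k ∈ range K, x j ^ k := sum_finsupp_mpow x _ _
    _ ≤ ∏ j ∈ range N, exp (β * x j) :=
        prod_le_prod (fun j _ => sum_nonneg fun k _ => pow_nonneg (hx0 j) k)
          fun j _ => (hgeom j).trans (hxβ j)
    _ = exp (β * ∑ j ∈ range N, x j) := by rw [← exp_sum, mul_sum]
    _ ≤ exp (β * ∑' j, x j) := by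
        gcongr
        exact hx.sum_le_tsum _ fun j _ => hx0 j

lemma summable_mpow : Summable (mpow x) :=
  summable_of_sum_le (mpow_nonneg hx0) (sum_mpow_le_exp hx0 hx1 hβ hxβ hx)

lemma tsum_mpow_le_exp : ∑' ν, mpow x ν ≤ exp (β * ∑' j, x j) :=
  tsum_le_of_sum_le' (exp_pos _).le (sum_mpow_le_exp hx0 hx1 hβ hxβ hx)

end MpowSum

section TopElements

variable {ι : Type*} {f : ι → ℝ}

lemma exists_notMem_forall_notMem_le [Infinite ι] (hf : Filter.Tendsto f .cofinite (nhds 0))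
    (h0 : ∀ i, 0 ≤ f i) (T : Finset ι) : ∃ μ ∉ T, ∀ ν ∉ T, f ν ≤ f μ := by
  by_cases hpos : ∃ ν₀ ∉ T, 0 < f ν₀
  · obtain ⟨ν₀, hν₀T, hν₀⟩ := hpos
    have hfin : {μ | f ν₀ ≤ f μ}.Finite := by
      simpa using Filter.eventually_cofinite.1 (hf.eventually (gt_mem_nhds hν₀))
    obtain ⟨μ, ⟨hμ, hμT⟩, hmax⟩ :=
      Set.exists_max_image ({μ | f ν₀ ≤ f μ} \ T) f (hfin.subset Set.sdiff_subset)
        ⟨ν₀, Set.mem_ofPred.2 le_rfl, hν₀T⟩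
    refine ⟨μ, hμT, fun ν hνT => ?_⟩
    rcases le_total (f ν₀) (f ν) with h | h
    · exact hmax ν ⟨h, hνT⟩
    · exact h.trans hμ
  · push Not at hpos
    obtain ⟨μ, hμT⟩ := Infinite.exists_notMem_finset T
    exact ⟨μ, hμT, fun ν hνT => (hpos ν hνT).trans (h0 μ)⟩

lemma exists_finset_card_eq_forall_le [Infinite ι] (hf : Filter.Tendsto f .cofinite (nhds 0))
    (h0 : ∀ i, 0 ≤ f i) (n : ℕ) : ∃ T : Finset ι, T.card = n ∧ ∀ ν ∉ T, ∀ μ ∈ T, f ν ≤ f μ := by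
  classical
  induction n with
  | zero => exact ⟨∅, rfl, by simp⟩
  | succ n ih =>
    obtain ⟨T, hcard, htop⟩ := ih
    obtain ⟨μ₀, hμ₀T, hμ₀⟩ := exists_notMem_forall_notMem_le hf h0 T
    refine ⟨insert μ₀ T, by rw [Finset.card_insert_of_notMem hμ₀T, hcard], fun ν hν μ hμ => ?_⟩
    rw [Finset.mem_insert, not_or] at hν
    rcases Finset.mem_insert.1 hμ with rfl | hμT
    · exact hμ₀ ν hν.2
    · exact htop ν hν.2 μ hμT

lemma card_mul_le_tsum_sub (hf : Summable f) (h0 : ∀ i, 0 ≤ f i) {T : Finset ι}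
    (htop : ∀ ν ∉ T, ∀ μ ∈ T, f ν ≤ f μ) (a : ι) {ν : ι} (hν : ν ∉ T) :
    T.card * f ν ≤ ∑' μ, f μ - f a := by
  classical
  set s := insert a (insert ν T)
  have hcard : T.card ≤ (s.erase a).card := by
    rw [Finset.card_erase_of_mem (Finset.mem_insert_self a _)]
    have := Finset.card_le_card (Finset.subset_insert a (insert ν T))
    rw [Finset.card_insert_of_notMem hν] at this
    omega
  have hle : ∀ μ ∈ s.erase a, f ν ≤ f μ := by
    intro μ hμ
    rcases Finset.mem_insert.1 (Finset.mem_of_mem_erase hμ) with rfl | hμ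
    · exact absurd rfl (Finset.ne_of_mem_erase hμ)
    rcases Finset.mem_insert.1 hμ with rfl | hμT
    · exact le_rfl
    · exact htop ν hν μ hμT
  calc T.card * f ν ≤ (s.erase a).card * f ν := by gcongr; exact h0 ν
    _ ≤ ∑ μ ∈ s.erase a, f μ := by
        simpa using Finset.card_nsmul_le_sum _ _ _ hle
    _ = ∑ μ ∈ s, f μ - f a := by
        rw [← Finset.sum_erase_add _ _ (Finset.mem_insert_self a _), add_sub_cancel_right]
    _ ≤ ∑' μ, f μ - f a := by
        gcongr
        exact hf.sum_le_tsum _ fun μ _ => h0 μ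

end TopElements

lemma memℓp_of_lpF_ne_top {p : ℝ≥0∞} (hp : p ≠ 0) {a : MIdx → ℝ} (ha : ∀ ν, 0 ≤ a ν)
    (h : lpF p a ≠ ∞) : Memℓp a p := by
  rw [lpF] at h
  split_ifs at h with hpt
  · subst hpt
    refine memℓp_infty ⟨(⨆ ν, ENNReal.ofReal (a ν)).toReal, ?_⟩
    rintro _ ⟨ν, rfl⟩
    dsimp only
    rw [Real.norm_of_nonneg (ha ν), ← ENNReal.toReal_ofReal (ha ν)]
    exact ENNReal.toReal_mono h (le_iSup (fun ν => ENNReal.ofReal (a ν)) ν)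
  · have hP : 0 < p.toReal := ENNReal.toReal_pos hp hpt
    have hsum : ∑' ν, ENNReal.ofReal (a ν) ^ p.toReal ≠ ∞ := fun htop =>
      h (by rw [htop, ENNReal.top_rpow_of_pos (by positivity)])
    refine memℓp_gen ((ENNReal.summable_toReal hsum).congr fun ν => ?_)
    rw [← ENNReal.toReal_rpow, ENNReal.toReal_ofReal (ha ν), Real.norm_of_nonneg (ha ν)]

lemma Memℓp.summable_mul {ι : Type*} {p q : ℝ≥0∞} [p.HolderConjugate q] {a b : ι → ℝ}
    (ha : Memℓp a p) (hb : Memℓp b q) : Summable fun i => a i * b i := by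
  have hab : Memℓp (fun i => a i * b i) 1 :=
    Memℓp.holder (𝕜 := ℝ) (E := fun _ => ℝ) (F := fun _ => ℝ) (G := fun _ => ℝ) 1 ha hb
      (fun _ => ContinuousLinearMap.mul ℝ ℝ) (K := 1) fun _ => ContinuousLinearMap.opNorm_mul_le ℝ ℝ
  have hnorm := (memℓp_gen_iff (by simp)).1 hab
  simp only [ENNReal.toReal_one, Real.rpow_one] at hnorm
  exact hnorm.of_norm

lemma memℓp_mpow {z : ℕ → ℝ} {s : ℝ≥0∞} (hz0 : ∀ j, 0 ≤ z j) (hz1 : ∀ j, z j ≤ 1)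
    (hs : s ≠ ∞ → Summable (mpow fun j => z j ^ s.toReal)) : Memℓp (mpow z) s := by
  rcases eq_or_ne s ∞ with rfl | hst
  · refine memℓp_infty ⟨1, ?_⟩
    rintro _ ⟨ν, rfl⟩
    dsimp only
    rw [Real.norm_eq_abs]
    exact abs_mpow_le_one (fun j => by rw [abs_of_nonneg (hz0 j)]; exact hz1 j) ν
  · refine memℓp_gen ((hs hst).congr fun ν => ?_)
    rw [Real.norm_of_nonneg (mpow_nonneg hz0 ν), mpow_rpow hz0]

lemma ENNReal.HolderConjugate.one_sub_inv_toReal {p q : ℝ≥0∞} [p.HolderConjugate q] :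
    1 - p.toReal⁻¹ = q.toReal⁻¹ := by
  rw [← ENNReal.toReal_inv, ← ENNReal.toReal_inv, ← ENNReal.HolderConjugate.one_sub_inv p q,
    ENNReal.toReal_sub_of_le (ENNReal.inv_le_one.2 (ENNReal.HolderConjugate.one_le p q))
      ENNReal.one_ne_top, ENNReal.toReal_one]

lemma summable_mpow_rpow_mul_norm_of_lpF_ne_top {X : Type*} [NormedAddCommGroup X]
    {p : ℝ≥0∞} (hp : 1 ≤ p) {ρ : ℕ → ℝ} (hρ : ∀ j, 1 ≤ ρ j) {q : ℝ} (hq : 0 ≤ q)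
    (hsum : Summable (mpow fun j => (ρ j)⁻¹ ^ q)) {t : MIdx → X}
    (hM : lpF p (fun ν => mpow ρ ν * ‖t ν‖) ≠ ∞) :
    Summable fun ν => mpow (fun j => ρ j ^ (1 - q * (1 - 1 / p.toReal))) ν * ‖t ν‖ := by
  have := ENNReal.HolderConjugate.conjExponent hp
  set p' := p.conjExponent
  have hρ0 : ∀ j, 0 < ρ j := fun j => one_pos.trans_le (hρ j)
  set z : ℕ → ℝ := fun j => ρ j ^ (-(q * p'.toReal⁻¹))
  have hz0 : ∀ j, 0 ≤ z j := fun j => Real.rpow_nonneg (hρ0 j).le _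
  have hsplit : ∀ ν, mpow (fun j => ρ j ^ (1 - q * (1 - 1 / p.toReal))) ν * ‖t ν‖
      = (mpow ρ ν * ‖t ν‖) * mpow z ν := fun ν => by
    rw [mul_right_comm, ← mpow_mul]
    congr 2
    ext j
    rw [one_div, ENNReal.HolderConjugate.one_sub_inv_toReal (q := p'), sub_eq_add_neg,
      Real.rpow_add (hρ0 j), Real.rpow_one]
  have hz : Memℓp (mpow z) p' := by
    refine memℓp_mpow hz0 (fun j => Real.rpow_le_one_of_one_le_of_nonpos (hρ j)
      (neg_nonpos.2 (mul_nonneg hq (inv_nonneg.2 ENNReal.toReal_nonneg)))) fun hp' => ?_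
    refine hsum.congr fun ν => ?_
    congr 1
    ext j
    have hp'0 : p'.toReal ≠ 0 := (ENNReal.toReal_pos (ENNReal.HolderConjugate.ne_zero p' p) hp').ne'
    rw [← Real.rpow_mul (hρ0 j).le, neg_mul, mul_assoc, inv_mul_cancel₀ hp'0, mul_one,
      Real.rpow_neg (hρ0 j).le, Real.inv_rpow (hρ0 j).le]
  have hρt : Memℓp (fun ν => mpow ρ ν * ‖t ν‖) p :=
    memℓp_of_lpF_ne_top (ENNReal.HolderConjugate.ne_zero p p')
      (fun ν => mul_nonneg (mpow_nonneg (fun j => (hρ0 j).le) ν) (norm_nonneg _)) hM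
  exact (hρt.summable_mul hz).congr fun ν => (hsplit ν).symm

lemma norm_tsum_sub_sum_le {ι X : Type*} [NormedAddCommGroup X] [CompleteSpace X] {f : ι → X}
    {w : ι → ℝ} {Λ : Finset ι} {D : ℝ} (hf : Summable fun i => ‖f i‖) (hw : Summable w)
    (hw0 : ∀ i, 0 ≤ w i) (hD : 0 ≤ D) (hfw : ∀ i ∉ Λ, ‖f i‖ ≤ D * w i) :
    ‖∑' i, f i - ∑ i ∈ Λ, f i‖ ≤ D * ∑' i, w i := by
  rw [← hf.of_norm.sum_add_tsum_compl (s := Λ), add_sub_cancel_left]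
  calc ‖∑' i : ↥(↑Λ : Set ι)ᶜ, f i‖ ≤ ∑' i : ↥(↑Λ : Set ι)ᶜ, ‖f i‖ :=
        norm_tsum_le_tsum_norm (hf.subtype _)
    _ ≤ ∑' i : ↥(↑Λ : Set ι)ᶜ, D * w i :=
        (hf.subtype _).tsum_le_tsum (fun i => hfw i i.2) ((hw.mul_left D).subtype _)
    _ = D * ∑' i : ↥(↑Λ : Set ι)ᶜ, w i := tsum_mul_left
    _ ≤ D * ∑' i, w i := by
        gcongr
        exact Summable.tsum_subtype_le w _ hw0 hw

def taylorBeta (κmin s : ℝ) : ℝ := -log (1 - κmin ^ (-s)) * κmin ^ s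

lemma taylorBeta_eq {κmin s : ℝ} (h : 0 ≤ κmin) :
    taylorBeta κmin s = -log (1 - κmin ^ (-s)) / κmin ^ (-s) := by
  rw [taylorBeta, rpow_neg h, div_inv_eq_mul]

lemma taylorBeta_nonneg {κmin s : ℝ} (hκmin : 1 < κmin) (hs : 0 < s) : 0 ≤ taylorBeta κmin s := by
  have hc : κmin ^ (-s) < 1 := rpow_lt_one_of_one_lt_of_neg hκmin (neg_lt_zero.2 hs)
  have hc0 : 0 < κmin ^ (-s) := rpow_pos_of_pos (by linarith) _
  rw [taylorBeta_eq (by linarith)]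
  exact div_nonneg (neg_nonneg.2 (log_nonpos (by linarith) (by linarith))) hc0.le

section InvRpow

variable {κ : ℕ → ℝ} {κmin s : ℝ} (hκmin : 1 < κmin) (hκ : ∀ j, κmin ≤ κ j)
include hκmin hκ

lemma inv_rpow_nonneg (j : ℕ) : 0 ≤ (κ j)⁻¹ ^ s :=
  rpow_nonneg (inv_nonneg.2 (by linarith [hκ j])) s

variable (hs : 0 < s)
include hs

lemma inv_rpow_le_rpow_neg (j : ℕ) : (κ j)⁻¹ ^ s ≤ κmin ^ (-s) := by
  rw [inv_rpow (by linarith [hκ j]), ← rpow_neg (by linarith [hκ j])]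
  exact rpow_le_rpow_of_nonpos (by linarith) (hκ j) (by linarith)

lemma inv_rpow_lt_one (j : ℕ) : (κ j)⁻¹ ^ s < 1 :=
  (inv_rpow_le_rpow_neg hκmin hκ hs j).trans_lt
    (rpow_lt_one_of_one_lt_of_neg hκmin (neg_lt_zero.2 hs))

lemma inv_one_sub_inv_rpow_le_exp (j : ℕ) :
    (1 - (κ j)⁻¹ ^ s)⁻¹ ≤ exp (taylorBeta κmin s * (κ j)⁻¹ ^ s) := by
  rw [taylorBeta_eq (by linarith)]
  exact inv_one_sub_le_exp_mul (rpow_pos_of_pos (by linarith) _)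
    (rpow_lt_one_of_one_lt_of_neg hκmin (neg_lt_zero.2 hs)) (inv_rpow_nonneg hκmin hκ j)
    (inv_rpow_le_rpow_neg hκmin hκ hs j)

lemma inv_mpow_eq_mpow_inv_rpow_rpow (ν : MIdx) :
    (mpow κ ν)⁻¹ = mpow (fun j => (κ j)⁻¹ ^ s) ν ^ (1 / s) := by
  rw [mpow_rpow (inv_rpow_nonneg hκmin hκ), ← mpow_inv]
  congr 1
  ext j
  rw [← rpow_mul (inv_nonneg.2 (by linarith [hκ j])), mul_one_div_cancel hs.ne', rpow_one]

variable (hsum : Summable fun j => (κ j)⁻¹ ^ s)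
include hsum

lemma summable_mpow_inv_rpow : Summable (mpow fun j => (κ j)⁻¹ ^ s) :=
  summable_mpow (inv_rpow_nonneg hκmin hκ) (inv_rpow_lt_one hκmin hκ hs)
    (taylorBeta_nonneg hκmin hs) (inv_one_sub_inv_rpow_le_exp hκmin hκ hs) hsum

lemma tsum_mpow_inv_rpow_le_exp :
    ∑' ν, mpow (fun j => (κ j)⁻¹ ^ s) ν ≤ exp (taylorBeta κmin s * ∑' j, (κ j)⁻¹ ^ s) :=
  tsum_mpow_le_exp (inv_rpow_nonneg hκmin hκ) (inv_rpow_lt_one hκmin hκ hs)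
    (taylorBeta_nonneg hκmin hs) (inv_one_sub_inv_rpow_le_exp hκmin hκ hs) hsum

theorem exists_finset_norm_tsum_sub_sum_le {X : Type*} [NormedAddCommGroup X] [NormedSpace ℝ X]
    [CompleteSpace X] {t : MIdx → X} (ht : Summable fun ν => mpow κ ν * ‖t ν‖)
    (habs : ∀ y : ℕ → ℝ, (∀ j, |y j| ≤ 1) → Summable fun ν => ‖mpow y ν • t ν‖) (m : ℕ) :
    ∃ Λ : Finset MIdx, Λ.card = m + 1 ∧
      ∀ y : ℕ → ℝ, (∀ j, |y j| ≤ 1) →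
        ‖(∑' ν, mpow y ν • t ν) - ∑ ν ∈ Λ, mpow y ν • t ν‖ ≤
          taylorBeta κmin s ^ (1 / s) * exp (taylorBeta κmin s / s * ∑' j, (κ j)⁻¹ ^ s) *
            (∑' ν, mpow κ ν * ‖t ν‖) * (∑' j, (κ j)⁻¹ ^ s) ^ (1 / s) *
              ((m : ℝ) + 1) ^ (-(1 / s)) := by
  set β := taylorBeta κmin s
  set x : ℕ → ℝ := fun j => (κ j)⁻¹ ^ s
  set S := ∑' j, x j
  have hκ0 : ∀ j, 0 < κ j := fun j => by linarith [hκ j]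
  have hx0 : ∀ j, 0 ≤ x j := inv_rpow_nonneg hκmin hκ
  have hβ : 0 ≤ β := taylorBeta_nonneg hκmin hs
  have hS : 0 ≤ S := tsum_nonneg hx0
  have hsx := summable_mpow_inv_rpow hκmin hκ hs hsum
  obtain ⟨Λ, hcard, htop⟩ :=
    exists_finset_card_eq_forall_le hsx.tendsto_cofinite_zero (mpow_nonneg hx0) (m + 1)
  have hsel : ∀ ν ∉ Λ, ((m : ℝ) + 1) * mpow x ν ≤ β * S * exp (β * S) := fun ν hν =>
    calc ((m : ℝ) + 1) * mpow x ν ≤ ∑' μ, mpow x μ - mpow x 0 := by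
          simpa [hcard] using card_mul_le_tsum_sub hsx (mpow_nonneg hx0) htop 0 hν
      _ ≤ exp (β * S) - 1 := by
          rw [mpow_zero]
          gcongr
          exact tsum_mpow_inv_rpow_le_exp hκmin hκ hs hsum
      _ ≤ β * S * exp (β * S) := exp_sub_one_le_mul_exp _
  set D := (β * S * exp (β * S) / ((m : ℝ) + 1)) ^ (1 / s) with hDdef
  have hD : ∀ ν ∉ Λ, (mpow κ ν)⁻¹ ≤ D := fun ν hν => by
    rw [inv_mpow_eq_mpow_inv_rpow_rpow hκmin hκ hs]
    refine rpow_le_rpow (mpow_nonneg hx0 ν) ?_ (by positivity)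
    rw [le_div_iff₀ (by positivity), mul_comm]
    exact hsel ν hν
  refine ⟨Λ, hcard, fun y hy => ?_⟩
  have hnorm : ∀ ν ∉ Λ, ‖mpow y ν • t ν‖ ≤ D * (mpow κ ν * ‖t ν‖) := fun ν hν =>
    calc ‖mpow y ν • t ν‖ ≤ ‖t ν‖ := by
          rw [norm_smul, Real.norm_eq_abs]
          exact mul_le_of_le_one_left (norm_nonneg _) (abs_mpow_le_one hy ν)
      _ = (mpow κ ν)⁻¹ * (mpow κ ν * ‖t ν‖) :=
          (inv_mul_cancel_left₀ (mpow_pos hκ0 ν).ne' _).symm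
      _ ≤ D * (mpow κ ν * ‖t ν‖) := by
          gcongr
          · exact mul_nonneg (mpow_nonneg (fun j => (hκ0 j).le) ν) (norm_nonneg _)
          · exact hD ν hν
  calc _ ≤ D * ∑' ν, mpow κ ν * ‖t ν‖ :=
        norm_tsum_sub_sum_le (habs y hy) ht
          (fun ν => mul_nonneg (mpow_nonneg (fun j => (hκ0 j).le) ν) (norm_nonneg _))
          (by positivity) hnorm
    _ = _ := by
        rw [hDdef, div_rpow (by positivity) (by positivity),
          mul_rpow (by positivity) (by positivity), mul_rpow hβ hS, ← exp_mul,
          rpow_neg (by positivity), div_eq_mul_inv]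
        ring_nf

end InvRpow

/-- Global Taylor approximation error estimate via the modified sequence
`κ_j = ρ_j^θ`, `θ = 1 - q/p'`, `q_θ = q/θ`: `u ∈ B_{ρ,p}` implies `M₁ = Σ_ν κ^ν ‖t_ν‖ < ∞`
and for each `m ≥ 0` there is a set `Λ` with `m+1` terms such that
`sup_{y∈Y} ‖u(y) − P(y)‖ ≤ C(κ,q_θ) M₁ ‖(κ_j^{-1})‖_{ℓ_{q_θ}(ℕ)} (m+1)^{-r}`.
Here `1/p' = 1 - 1/p.toReal` and the condition `0 < q < p'` is encoded by `0 < q`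
together with `0 < r`. -/
theorem global_taylor_error_kappa
    {X : Type*} [NormedAddCommGroup X] [NormedSpace ℝ X] [CompleteSpace X]
    (p : ℝ≥0∞) (hp : 1 ≤ p)
    (q : ℝ) (hq : 0 < q)
    (r : ℝ) (hrdef : r = -1 + 1 / p.toReal + 1 / q) (hr : 0 < r)
    (ρ : ℕ → ℝ) (ρmin : ℝ) (hρmin : ρmin = ⨅ j, ρ j) (hmin : 1 < ρmin)
    (hρq : Summable fun j => ((ρ j)⁻¹) ^ q)
    (θ : ℝ) (hθ : θ = 1 - q * (1 - 1 / p.toReal))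
    (κ : ℕ → ℝ) (hκ : ∀ j, κ j = ρ j ^ θ)
    (qθ : ℝ) (hqθ : qθ = q / θ)
    (κmin : ℝ) (hκmin : κmin = ρmin ^ θ)
    (β : ℝ) (hβ : β = -Real.log (1 - κmin ^ (-qθ)) * κmin ^ qθ)
    (C : ℝ) (hC : C = β ^ (1 / qθ) * Real.exp (β / qθ * ∑' j, ((κ j)⁻¹) ^ qθ))
    (t : MIdx → X)
    (hM : lpF p (fun ν => mpow ρ ν * ‖t ν‖) ≠ ∞)
    (habs : ∀ y : ℕ → ℝ, (∀ j, |y j| ≤ 1) →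
      Summable fun ν : MIdx => ‖mpow y ν • t ν‖)
    (m : ℕ) :
    Summable (fun ν : MIdx => mpow κ ν * ‖t ν‖) ∧
    ∃ Λ : Finset MIdx, Λ.card = m + 1 ∧
      ∀ y : ℕ → ℝ, (∀ j, |y j| ≤ 1) →
        ‖(∑' ν : MIdx, mpow y ν • t ν) - ∑ ν ∈ Λ, mpow y ν • t ν‖ ≤
          C * (∑' ν : MIdx, mpow κ ν * ‖t ν‖) *
            (∑' j, ((κ j)⁻¹) ^ qθ) ^ (1 / qθ) * ((m : ℝ) + 1) ^ (-r) := by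
  have hρ : ∀ j, ρmin ≤ ρ j := by
    subst hρmin
    exact Real.iInf_le_of_ne_zero (one_pos.trans hmin).ne'
  have hθr : θ = q * r := by
    rw [hθ, hrdef]
    field_simp
    ring
  have hθ0 : 0 < θ := hθr ▸ mul_pos hq hr
  have hrqθ : r = 1 / qθ := by
    rw [hqθ, hθr]
    field_simp
  have hκmin1 : 1 < κmin := hκmin ▸ one_lt_rpow hmin hθ0
  have hκmin_le : ∀ j, κmin ≤ κ j := fun j => by
    rw [hκmin, hκ]
    exact rpow_le_rpow (by linarith) (hρ j) hθ0.le
  have hκρ : (fun j => (κ j)⁻¹ ^ qθ) = fun j => (ρ j)⁻¹ ^ q := funext fun j => by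
    have hρ0 : 0 < ρ j := by linarith [hρ j]
    rw [hκ, ← inv_rpow hρ0.le, ← rpow_mul (inv_nonneg.2 hρ0.le), hqθ, mul_div_cancel₀ _ hθ0.ne']
  have hM₁ : Summable fun ν => mpow κ ν * ‖t ν‖ := by
    rw [show κ = fun j => ρ j ^ (1 - q * (1 - 1 / p.toReal)) from funext fun j => by rw [hκ, hθ]]
    exact summable_mpow_rpow_mul_norm_of_lpF_ne_top hp (fun j => by linarith [hρ j]) hq.le
      (summable_mpow_inv_rpow hmin hρ hq hρq) hM
  obtain ⟨Λ, hcard, hΛ⟩ := exists_finset_norm_tsum_sub_sum_le hκmin1 hκmin_le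
    (hqθ ▸ div_pos hq hθ0) (hκρ ▸ hρq) hM₁ habs m
  refine ⟨hM₁, Λ, hcard, fun y hy => (hΛ y hy).trans_eq ?_⟩
  rw [hC, hβ, hrqθ, taylorBeta]
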